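/- arXiv:2304.03627 — 3 statements merged into one kernel-verified Lean document; each statement's English description precedes it below -/
import Mathlib

section
/- Let d ≥ 2 and let P ⊂ ℝ^d be a lattice polytope whose first width is w1 and whose second width is w2. Then P is affine equivalent to a subset of [0, w1] × [0, w2] × ℝ^{d−2}. -/
open scoped Pointwise

noncomputable section

/-- Embed an integer lattice point into real space. -/
def intEmbed {d : ℕ} (v : Fin d → ℤ) : Fin d → ℝ := fun i => (v i : ℝ)

/-- Pairing of an integer dual vector with a real point. -/
def dualPair {d : ℕ} (u : Fin d → ℤ) (x : Fin d → ℝ) : ℝ := ∑ i, (u i : ℝ) * x i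

/-- The width of a set `P ⊆ ℝ^d` with respect to an integer dual vector `u`:
`max_{x ∈ P} u·x − min_{x ∈ P} u·x`. -/
def widthIn {d : ℕ} (u : Fin d → ℤ) (P : Set (Fin d → ℝ)) : ℝ :=
  sSup (dualPair u '' P) - sInf (dualPair u '' P)

/-- `w` is a tuple of widths of `P` realized by linearly independent dual vectors. -/
def IsWidthTuple {d : ℕ} (P : Set (Fin d → ℝ)) (w : Fin d → ℝ) : Prop :=
  ∃ u : Fin d → (Fin d → ℤ), LinearIndependent ℤ u ∧ ∀ i, widthIn (u i) P = w i

/-- `w` is the multi-width of `P`: the lexicographically minimal width tuple over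
linearly independent tuples of dual vectors. -/
def IsMultiWidth {d : ℕ} (P : Set (Fin d → ℝ)) (w : Fin d → ℝ) : Prop :=
  IsWidthTuple P w ∧ ∀ w' : Fin d → ℝ, IsWidthTuple P w' → toLex w ≤ toLex w'

/-- The affine map `x ↦ A x + b` on real points, with integral `A` and `b`. -/
def unimodMap {d : ℕ} (A : Matrix (Fin d) (Fin d) ℤ) (b : Fin d → ℤ) (x : Fin d → ℝ) :
    Fin d → ℝ :=
  fun i => (∑ j, (A i j : ℝ) * x j) + (b i : ℝ)

/-- Affine unimodular equivalence of subsets of `ℝ^d`: `Q = A·P + b` with `A ∈ GL_d(ℤ)`,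
`b ∈ ℤ^d`. -/
def AffEquiv {d : ℕ} (P Q : Set (Fin d → ℝ)) : Prop :=
  ∃ A : Matrix (Fin d) (Fin d) ℤ, IsUnit A.det ∧ ∃ b : Fin d → ℤ, Q = unimodMap A b '' P

/-- A lattice polytope: the convex hull of finitely many lattice points. -/
def IsLatticePolytope {d : ℕ} (P : Set (Fin d → ℝ)) : Prop :=
  ∃ V : Finset (Fin d → ℤ), V.Nonempty ∧ P = convexHull ℝ (intEmbed '' (V : Set (Fin d → ℤ)))

/-- A lattice tetrahedron: the convex hull of 4 affinely independent lattice points in `ℝ³`. -/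
def IsLatticeTetrahedron (P : Set (Fin 3 → ℝ)) : Prop :=
  ∃ v : Fin 4 → (Fin 3 → ℤ), AffineIndependent ℝ (fun i => intEmbed (v i)) ∧
    P = convexHull ℝ (Set.range fun i => intEmbed (v i))

/-- The type of affine equivalence classes of lattice tetrahedra with multi-width `w`. -/
def TetClasses (w : Fin 3 → ℝ) : Type :=
  Quot fun P Q : {P : Set (Fin 3 → ℝ) // IsLatticeTetrahedron P ∧ IsMultiWidth P w} =>
    AffEquiv P.1 Q.1

/-- The real points of a multiset of lattice points. -/
def msetPts {d : ℕ} (S : Multiset (Fin d → ℤ)) : Set (Fin d → ℝ) :=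
  intEmbed '' {v | v ∈ S}

/-- The convex hull of a multiset of lattice points. -/
def msetHull {d : ℕ} (S : Multiset (Fin d → ℤ)) : Set (Fin d → ℝ) :=
  convexHull ℝ (msetPts S)

/-- Affine unimodular equivalence of multisets of lattice points. -/
def MsetEquiv {d : ℕ} (S T : Multiset (Fin d → ℤ)) : Prop :=
  ∃ A : Matrix (Fin d) (Fin d) ℤ, IsUnit A.det ∧ ∃ b : Fin d → ℤ,
    S.map (fun v => A.mulVec v + b) = T

/-- Affine unimodular equivalence of multisets of integers (`d = 1`). -/
def MsetEquivZ (S T : Multiset ℤ) : Prop :=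
  ∃ a : ℤ, IsUnit a ∧ ∃ b : ℤ, S.map (fun x => a * x + b) = T

/-- The width of a multiset of integers (the width of its convex hull). -/
def widthZ (S : Multiset ℤ) : ℝ :=
  sSup ((fun n : ℤ => (n : ℝ)) '' {n | n ∈ S}) - sInf ((fun n : ℤ => (n : ℝ)) '' {n | n ∈ S})

/-- `S` has a dual vector `u` of width `w1` whose image multiset `u·S` is affine
equivalent in `ℤ` to the multiset `L`. -/
def HasLineType (w1 : ℤ) (L : Multiset ℤ) (S : Multiset (Fin 2 → ℤ)) : Prop :=
  ∃ u : Fin 2 → ℤ, widthIn u (msetHull S) = (w1 : ℝ) ∧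
    MsetEquivZ (S.map fun v => ∑ i, u i * v i) L

/-!
Let `u₀, u₁` realize the first two widths. In a basis of `ℤ^d` adapted to `span {u₀, u₁}`
(Smith normal form), a `2 × 2` Hermite normal form gives `u₀ = g • p` and `u₁ = r • p + c • v`
with `0 < g`, `0 ≤ r < c`, where `p, v` are two rows of a unimodular matrix. Then
`width p ≤ width u₀ = w₁`, and since `w₁ ≤ w₂` by lexicographic minimality,
`c • width v ≤ w₂ + r • w₁ ≤ c • w₂`. The minima of `p` and `v` on `P` are attained at vertices,
hence integral, so translating by them puts `P` into `[0, w₁] × [0, w₂] × ℝ^{d-2}`.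
-/

section Lattice

open Submodule

variable {M : Type*} [AddCommGroup M]

theorem span_pair_eq_of_mem {p q e f : M} (hp : p ∈ span ℤ {e, f}) (hq : q ∈ span ℤ {e, f})
    (he : e ∈ span ℤ {p, q}) (hf : f ∈ span ℤ {p, q}) : span ℤ {p, q} = span ℤ {e, f} := by
  apply le_antisymm <;> rw [span_le, Set.insert_subset_iff, Set.singleton_subset_iff]
  exacts [⟨hp, hq⟩, ⟨he, hf⟩]

theorem exists_smul_eq_of_mem_span_pair {e f u : M} (hu : u ∈ span ℤ {e, f}) (hu0 : u ≠ 0) :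
    ∃ g : ℤ, 0 < g ∧ ∃ p q : M, u = g • p ∧ span ℤ {p, q} = span ℤ {e, f} := by
  obtain ⟨a, b, rfl⟩ := mem_span_pair.1 hu
  have hab : 0 < Int.gcd a b := Int.gcd_pos_iff.2 <| by
    by_contra! h
    simp [h.1, h.2] at hu0
  obtain ⟨g, α, β, hg, hαβ, rfl, rfl⟩ := Int.exists_gcd_one' hab
  obtain ⟨s, t, hst⟩ := Int.isCoprime_iff_gcd_eq_one.2 hαβ
  refine ⟨g, by exact_mod_cast hg, α • e + β • f, (-t) • e + s • f, by module,
    span_pair_eq_of_mem ?_ ?_ ?_ ?_⟩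
  · exact mem_span_pair.2 ⟨_, _, rfl⟩
  · exact mem_span_pair.2 ⟨_, _, rfl⟩
  · exact mem_span_pair.2 ⟨s, -β, by linear_combination (norm := module) hst • e⟩
  · exact mem_span_pair.2 ⟨t, α, by linear_combination (norm := module) hst • f⟩

theorem exists_add_smul_eq_of_mem_span_pair {p q u : M} (hu : u ∈ span ℤ {p, q})
    (hup : u ∉ ℤ ∙ p) :
    ∃ r c : ℤ, 0 ≤ r ∧ r < c ∧ ∃ v : M, u = r • p + c • v ∧ span ℤ {p, v} = span ℤ {p, q} := by
  obtain ⟨m, c, rfl⟩ := mem_span_pair.1 hu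
  have hc : c ≠ 0 := by
    rintro rfl
    exact hup (by simpa using smul_mem _ m (mem_span_singleton_self p))
  have hc' : 0 < |c| := abs_pos.2 hc
  have hsign : c.sign * c.sign = 1 := by
    rcases hc.lt_or_gt with h | h <;> simp [Int.sign_eq_neg_one_of_neg, Int.sign_eq_one_of_pos, h]
  refine ⟨m % |c|, |c|, Int.emod_nonneg _ hc'.ne', Int.emod_lt_of_pos _ hc',
    (m / |c|) • p + c.sign • q, ?_, span_pair_eq_of_mem ?_ ?_ ?_ ?_⟩
  · linear_combination (norm := module)
      (Int.emod_add_mul_ediv m |c|).symm • p - (Int.sign_mul_abs c) • q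
  · exact subset_span (by simp)
  · exact mem_span_pair.2 ⟨_, _, rfl⟩
  · exact subset_span (by simp)
  · refine mem_span_pair.2 ⟨-(c.sign * (m / |c|)), c.sign, ?_⟩
    linear_combination (norm := module) hsign • q

theorem Matrix.isUnit_det_of_span_rows_eq_top {ι R : Type*} [Fintype ι] [DecidableEq ι]
    [CommRing R] {A : Matrix ι ι R} (hA : span R (Set.range A) = ⊤) : IsUnit A.det := by
  rw [← Matrix.isUnit_iff_isUnit_det, ← Matrix.vecMul_surjective_iff_isUnit]
  exact LinearMap.range_eq_top.1 ((range_vecMulLinear A).trans hA)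

theorem exists_basis_mem_span_pair {ι : Type*} [Fintype ι] {i₀ i₁ : ι} (h : i₀ ≠ i₁)
    {u₀ u₁ : ι → ℤ} (hu : LinearIndependent ℤ ![u₀, u₁]) :
    ∃ b : Module.Basis ι ℤ (ι → ℤ), u₀ ∈ span ℤ {b i₀, b i₁} ∧ u₁ ∈ span ℤ {b i₀, b i₁} := by
  set N := span ℤ (Set.range ![u₀, u₁])
  obtain ⟨n, snf⟩ := N.smithNormalForm (Pi.basisFun ℤ ι)
  obtain rfl : n = 2 := by
    simpa using (Module.finrank_eq_card_basis snf.bN).symm.trans (finrank_span_eq_card hu)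
  obtain ⟨σ, hσ⟩ := Equiv.Perm.exists_extending_pair ![i₀, i₁] snf.f
    (by simp [Function.Injective, Fin.forall_fin_two, h, h.symm]) snf.f.injective
  refine ⟨snf.bM.reindex σ.symm, ?_⟩
  have key : ∀ x ∈ N, x ∈ span ℤ {snf.bM (snf.f 0), snf.bM (snf.f 1)} := by
    intro x hx
    have hrepr := congrArg Subtype.val (snf.bN.sum_repr ⟨x, hx⟩)
    simp only [Fin.sum_univ_two, coe_add, coe_smul, snf.snf, smul_smul] at hrepr
    exact mem_span_pair.2 ⟨_, _, hrepr⟩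
  simp only [Module.Basis.reindex_apply, Equiv.symm_symm]
  have h0 := hσ 0
  have h1 := hσ 1
  simp only [Matrix.cons_val_zero, Matrix.cons_val_one] at h0 h1
  rw [h0, h1]
  exact ⟨key _ (subset_span ⟨0, rfl⟩), key _ (subset_span ⟨1, rfl⟩)⟩

theorem exists_isUnit_det_hermite_rows {ι : Type*} [Fintype ι] [DecidableEq ι] {i₀ i₁ : ι}
    (h : i₀ ≠ i₁) {u₀ u₁ : ι → ℤ} (hu : LinearIndependent ℤ ![u₀, u₁]) :
    ∃ A : Matrix ι ι ℤ, IsUnit A.det ∧ ∃ g r c : ℤ, 0 < g ∧ 0 ≤ r ∧ r < c ∧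
      u₀ = g • A i₀ ∧ u₁ = r • A i₀ + c • A i₁ := by
  obtain ⟨b, hb₀, hb₁⟩ := exists_basis_mem_span_pair h hu
  obtain ⟨g, hg, p, q, rfl, hpq⟩ :=
    exists_smul_eq_of_mem_span_pair hb₀ (hu.ne_zero 0)
  have hu₁ : u₁ ∉ ℤ ∙ p := by
    intro hp
    obtain ⟨m, rfl⟩ := mem_span_singleton.1 hp
    have := LinearIndependent.pair_iff.1 hu m (-g) (by simp only [smul_smul]; module)
    exact hg.ne' (neg_eq_zero.1 this.2)
  obtain ⟨r, c, hr, hrc, v, rfl, hpv⟩ := exists_add_smul_eq_of_mem_span_pair (hpq ▸ hb₁) hu₁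
  set A : Matrix ι ι ℤ := Function.update (Function.update b i₀ p) i₁ v
  have hA₀ : A i₀ = p := by simp [A, h]
  have hA₁ : A i₁ = v := by simp [A]
  refine ⟨A, Matrix.isUnit_det_of_span_rows_eq_top ?_, g, r, c, hg, hr, hrc, by rw [hA₀],
    by rw [hA₀, hA₁]⟩
  rw [eq_top_iff, ← b.span_eq, span_le]
  rintro _ ⟨i, rfl⟩
  have hpair : span ℤ {b i₀, b i₁} ≤ span ℤ (Set.range A) := by
    rw [← hpq, ← hpv, span_le, Set.insert_subset_iff, Set.singleton_subset_iff]
    exact ⟨subset_span ⟨i₀, hA₀⟩, subset_span ⟨i₁, hA₁⟩⟩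
  by_cases hi₀ : i = i₀
  · exact hpair (subset_span (by simp [hi₀]))
  by_cases hi₁ : i = i₁
  · exact hpair (subset_span (by simp [hi₁]))
  exact subset_span ⟨i, by simp [A, hi₀, hi₁]⟩

end Lattice

section Width

variable {d : ℕ}

theorem dualPair_smul (k : ℤ) (u : Fin d → ℤ) (x : Fin d → ℝ) :
    dualPair (k • u) x = k * dualPair u x := by
  simp [dualPair, Finset.mul_sum, mul_assoc]

theorem dualPair_sub (u v : Fin d → ℤ) (x : Fin d → ℝ) :
    dualPair (u - v) x = dualPair u x - dualPair v x := by
  simp [dualPair, sub_mul, Finset.sum_sub_distrib]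

theorem dualPair_intEmbed (u v : Fin d → ℤ) : dualPair u (intEmbed v) = ((u ⬝ᵥ v : ℤ) : ℝ) := by
  simp [dualPair, intEmbed, dotProduct]

theorem unimodMap_apply (A : Matrix (Fin d) (Fin d) ℤ) (b : Fin d → ℤ) (x : Fin d → ℝ)
    (i : Fin d) :
    unimodMap A b x i = dualPair (A i) x + b i :=
  rfl

theorem isLinearMap_dualPair (u : Fin d → ℤ) : IsLinearMap ℝ (dualPair u) where
  map_add x y := by simp [dualPair, mul_add, Finset.sum_add_distrib]
  map_smul c x := by simp [dualPair, Finset.mul_sum, mul_left_comm]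

theorem continuous_dualPair (u : Fin d → ℤ) : Continuous (dualPair u) := by
  unfold dualPair
  fun_prop

theorem widthIn_smul {k : ℤ} (hk : 0 ≤ k) (u : Fin d → ℤ) (P : Set (Fin d → ℝ)) :
    widthIn (k • u) P = k * widthIn u P := by
  have himage : dualPair (k • u) '' P = (k : ℝ) • (dualPair u '' P) := by
    rw [← Set.image_smul, Set.image_image]
    simp only [dualPair_smul, smul_eq_mul]
  have hk' : (0 : ℝ) ≤ k := by exact_mod_cast hk
  rw [widthIn, widthIn, himage, Real.sSup_smul_of_nonneg hk', Real.sInf_smul_of_nonneg hk',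
    smul_eq_mul, smul_eq_mul, mul_sub]

variable {P : Set (Fin d → ℝ)}

theorem sInf_le_dualPair (hP : IsCompact P) (u : Fin d → ℤ) {y : Fin d → ℝ} (hy : y ∈ P) :
    sInf (dualPair u '' P) ≤ dualPair u y :=
  csInf_le (hP.bddBelow_image (continuous_dualPair u).continuousOn) (Set.mem_image_of_mem _ hy)

theorem dualPair_le_sSup (hP : IsCompact P) (u : Fin d → ℤ) {y : Fin d → ℝ} (hy : y ∈ P) :
    dualPair u y ≤ sSup (dualPair u '' P) :=
  le_csSup (hP.bddAbove_image (continuous_dualPair u).continuousOn) (Set.mem_image_of_mem _ hy)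

theorem dualPair_sub_sInf_mem_Icc (hP : IsCompact P) (u : Fin d → ℤ) {y : Fin d → ℝ}
    (hy : y ∈ P) : dualPair u y - sInf (dualPair u '' P) ∈ Set.Icc 0 (widthIn u P) := by
  have := sInf_le_dualPair hP u hy
  have := dualPair_le_sSup hP u hy
  exact ⟨by linarith, by unfold widthIn; linarith⟩

theorem widthIn_nonneg (hP : IsCompact P) (hne : P.Nonempty) (u : Fin d → ℤ) :
    0 ≤ widthIn u P :=
  let ⟨_, hy⟩ := hne
  (dualPair_sub_sInf_mem_Icc hP u hy).1.trans (dualPair_sub_sInf_mem_Icc hP u hy).2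

theorem widthIn_sub_le (hP : IsCompact P) (hne : P.Nonempty) (u v : Fin d → ℤ) :
    widthIn (u - v) P ≤ widthIn u P + widthIn v P := by
  have hsup :
      sSup (dualPair (u - v) '' P) ≤ sSup (dualPair u '' P) - sInf (dualPair v '' P) := by
    refine csSup_le (hne.image _) ?_
    rintro _ ⟨y, hy, rfl⟩
    rw [dualPair_sub]
    linarith [dualPair_le_sSup hP u hy, sInf_le_dualPair hP v hy]
  have hinf :
      sInf (dualPair u '' P) - sSup (dualPair v '' P) ≤ sInf (dualPair (u - v) '' P) := by
    refine le_csInf (hne.image _) ?_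
    rintro _ ⟨y, hy, rfl⟩
    rw [dualPair_sub]
    linarith [sInf_le_dualPair hP u hy, dualPair_le_sSup hP v hy]
  unfold widthIn
  linarith

theorem widthIn_le_of_eq_smul (hP : IsCompact P) (hne : P.Nonempty) {g : ℤ} (hg : 0 < g)
    {u p : Fin d → ℤ} (h : u = g • p) : widthIn p P ≤ widthIn u P := by
  have hg' : (1 : ℝ) ≤ g := by exact_mod_cast hg
  rw [h, widthIn_smul hg.le]
  nlinarith [widthIn_nonneg hP hne p]

theorem widthIn_le_of_eq_add_smul (hP : IsCompact P) (hne : P.Nonempty) {r c : ℤ} (hr : 0 ≤ r)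
    (hrc : r < c) {u p v : Fin d → ℤ} (h : u = r • p + c • v) (hp : widthIn p P ≤ widthIn u P) :
    widthIn v P ≤ widthIn u P := by
  have hcv : c • v = u - r • p := by rw [h]; abel
  have hsub : (c : ℝ) * widthIn v P ≤ widthIn u P + r * widthIn p P := by
    rw [← widthIn_smul (hr.trans hrc.le), hcv, ← widthIn_smul hr]
    exact widthIn_sub_le hP hne _ _
  have hr' : (0 : ℝ) ≤ r := by exact_mod_cast hr
  have hrc' : (r : ℝ) + 1 ≤ c := by exact_mod_cast hrc
  nlinarith [widthIn_nonneg hP hne u, mul_le_mul_of_nonneg_left hp hr']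

end Width

namespace IsLatticePolytope

variable {d : ℕ} {P : Set (Fin d → ℝ)}

theorem isCompact (hP : IsLatticePolytope P) : IsCompact P := by
  obtain ⟨V, -, rfl⟩ := hP
  exact (V.finite_toSet.image _).isCompact_convexHull ℝ

theorem nonempty (hP : IsLatticePolytope P) : P.Nonempty := by
  obtain ⟨V, ⟨v, hv⟩, rfl⟩ := hP
  exact ⟨_, subset_convexHull ℝ _ ⟨v, hv, rfl⟩⟩

theorem exists_sInf_dualPair_eq_intCast (hP : IsLatticePolytope P) (u : Fin d → ℤ) :
    ∃ m : ℤ, sInf (dualPair u '' P) = m := by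
  obtain ⟨y, hy, hy_eq⟩ :=
    (hP.isCompact.image (continuous_dualPair u)).sInf_mem (hP.nonempty.image _)
  have hc := hP.isCompact
  obtain ⟨V, -, rfl⟩ := hP
  obtain ⟨_, ⟨v, hv, rfl⟩, hvy⟩ := ((isLinearMap_dualPair u).mk'.concaveOn
    convex_univ).exists_le_of_mem_convexHull (Set.subset_univ _) hy
  rw [IsLinearMap.mk'_apply, IsLinearMap.mk'_apply, dualPair_intEmbed] at hvy
  refine ⟨u ⬝ᵥ v, le_antisymm ?_ (hvy.trans hy_eq.le)⟩
  rw [← dualPair_intEmbed]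
  exact sInf_le_dualPair hc u (subset_convexHull ℝ _ ⟨v, hv, rfl⟩)

theorem exists_dualPair_add_intCast_mem_Icc (hP : IsLatticePolytope P) (u : Fin d → ℤ) :
    ∃ m : ℤ, ∀ y ∈ P, dualPair u y + m ∈ Set.Icc 0 (widthIn u P) := by
  obtain ⟨m, hm⟩ := hP.exists_sInf_dualPair_eq_intCast u
  refine ⟨-m, fun y hy => ?_⟩
  simpa [hm, sub_eq_add_neg] using dualPair_sub_sInf_mem_Icc hP.isCompact u hy

end IsLatticePolytope

/-- A lattice polytope in `ℝ^d` (`d ≥ 2`) with first width `w₁` and second width `w₂`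
is affine equivalent to a subset of `[0, w₁] × [0, w₂] × ℝ^{d−2}`. -/
theorem polytope_in_strip (d : ℕ) (hd : 2 ≤ d) (P : Set (Fin d → ℝ))
    (hP : IsLatticePolytope P) (w : Fin d → ℝ) (hmw : IsMultiWidth P w) (w1 w2 : ℤ)
    (h1 : w ⟨0, by omega⟩ = (w1 : ℝ)) (h2 : w ⟨1, by omega⟩ = (w2 : ℝ)) :
    ∃ Q : Set (Fin d → ℝ), AffEquiv P Q ∧
      ∀ x ∈ Q, x ⟨0, by omega⟩ ∈ Set.Icc (0 : ℝ) (w1 : ℝ) ∧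
        x ⟨1, by omega⟩ ∈ Set.Icc (0 : ℝ) (w2 : ℝ) := by
  obtain ⟨⟨u, hu, hwu⟩, hmin⟩ := hmw
  set i₀ : Fin d := ⟨0, by omega⟩
  set i₁ : Fin d := ⟨1, by omega⟩
  have h01 : i₀ ≠ i₁ := by simp [i₀, i₁]
  have hw₁ : widthIn (u i₀) P = w1 := (hwu i₀).trans h1
  have hw₂ : widthIn (u i₁) P = w2 := (hwu i₁).trans h2
  have hw₁₂ : widthIn (u i₀) P ≤ widthIn (u i₁) P := by
    have hswap := hmin _ ⟨u ∘ Equiv.swap i₀ i₁, hu.comp _ (Equiv.injective _), fun i => hwu _⟩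
    simpa [hwu] using Pi.apply_le_of_toLex hswap (i := i₀)
      fun j hj => absurd (Fin.lt_def.1 hj) j.val.not_lt_zero
  have hpair : LinearIndependent ℤ ![u i₀, u i₁] := by
    convert hu.comp ![i₀, i₁] (by simp [Function.Injective, Fin.forall_fin_two, h01, h01.symm])
      using 1
    ext j : 1
    fin_cases j <;> rfl
  obtain ⟨A, hA, g, r, c, hg, hr, hrc, hu₀, hu₁⟩ := exists_isUnit_det_hermite_rows h01 hpair
  have hp : widthIn (A i₀) P ≤ w1 :=
    hw₁ ▸ widthIn_le_of_eq_smul hP.isCompact hP.nonempty hg hu₀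
  have hv : widthIn (A i₁) P ≤ w2 :=
    hw₂ ▸ widthIn_le_of_eq_add_smul hP.isCompact hP.nonempty hr hrc hu₁
      (hp.trans (hw₁ ▸ hw₂ ▸ hw₁₂))
  obtain ⟨m₀, hm₀⟩ := hP.exists_dualPair_add_intCast_mem_Icc (A i₀)
  obtain ⟨m₁, hm₁⟩ := hP.exists_dualPair_add_intCast_mem_Icc (A i₁)
  refine ⟨unimodMap A (fun i => if i = i₀ then m₀ else m₁) '' P, ⟨A, hA, _, rfl⟩, ?_⟩
  rintro _ ⟨y, hy, rfl⟩
  simp only [unimodMap_apply, if_neg h01.symm]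
  exact ⟨Set.Icc_subset_Icc_right hp (hm₀ y hy), Set.Icc_subset_Icc_right hv (hm₁ y hy)⟩
end
end

section
/- Let w1 > 0 be an integer and let Q_{w1} := conv((0,0), (0,w1), (w1/2, w1/2)) ⊂ ℝ². The map sending a lattice point (x1, x2) ∈ Q_{w1} ∩ ℤ² to the four-point multiset {0, x1, x2, w1} in ℤ is a bijection onto the set of affine equivalence classes of four-point multisets in ℤ of width w1. In particular, the number of such equivalence classes is w1²/4 + w1 + 1 if w1 is even and w1²/4 + w1 + 3/4 if w1 is odd. -/
open scoped Pointwise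

noncomputable section

/-- The triangle `Q_{w₁} = conv((0,0), (0,w₁), (w₁/2, w₁/2)) ⊆ ℝ²`. -/
def QTriangle (w1 : ℤ) : Set (Fin 2 → ℝ) :=
  convexHull ℝ ({![0, 0], ![0, (w1 : ℝ)], ![(w1 : ℝ) / 2, (w1 : ℝ) / 2]} : Set (Fin 2 → ℝ))

/-!
Four integers sort as `a ≤ b ≤ c ≤ d` with width `d - a`. The only unimodular affine maps of `ℤ`
are `x ↦ x + t` and `x ↦ t - x`, so an affine class is determined by its gap vector
`(b - a, c - a)` up to the reflection `(x₁, x₂) ↦ (w₁ - x₂, w₁ - x₁)`. The lattice points of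
`Q_{w₁}`, cut out by `0 ≤ x₁ ≤ x₂` and `x₁ + x₂ ≤ w₁`, are exactly the gap vectors lying on one
side of the reflection's fixed line `x₁ + x₂ = w₁`. Counting them column by column gives
`∑_{a ≤ w₁/2} (w₁ + 1 - 2a) = (⌊w₁/2⌋ + 1)(w₁ + 1 - ⌊w₁/2⌋)`.
-/

open Finset

lemma mem_QTriangle_iff {w : ℤ} (hw : 0 < w) {x : Fin 2 → ℝ} :
    x ∈ QTriangle w ↔ 0 ≤ x 0 ∧ x 0 ≤ x 1 ∧ x 0 + x 1 ≤ w := by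
  have hw' : (0 : ℝ) < w := by exact_mod_cast hw
  constructor
  · have hconv : Convex ℝ {x : Fin 2 → ℝ | 0 ≤ x 0 ∧ x 0 ≤ x 1 ∧ x 0 + x 1 ≤ w} := by
      rintro x ⟨hx₁, hx₂, hx₃⟩ y ⟨hy₁, hy₂, hy₃⟩ s t hs ht hst
      simp only [Set.mem_ofPred_eq, Pi.add_apply, Pi.smul_apply, smul_eq_mul]
      refine ⟨by positivity, by nlinarith, by nlinarith⟩
    refine fun hx => convexHull_min ?_ hconv hx
    rintro x (rfl | rfl | rfl) <;> simp <;> linarith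
  · rintro ⟨h₁, h₂, h₃⟩
    -- barycentric coordinates of `x` with respect to the three vertices
    have hx : x = ∑ i, ![(w - x 0 - x 1) / w, (x 1 - x 0) / w, 2 * x 0 / w] i •
        ![![0, 0], ![0, (w : ℝ)], ![(w : ℝ) / 2, (w : ℝ) / 2]] i := by
      ext j
      fin_cases j
      · simp [Fin.sum_univ_three]
        field_simp
      · simp [Fin.sum_univ_three]
        field_simp
        ring
    rw [hx]
    refine (convex_convexHull ℝ _).sum_mem (fun i _ => ?_) ?_ (fun i _ => subset_convexHull ℝ _ ?_)
    · fin_cases i <;> simp <;> apply div_nonneg <;> linarith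
    · simp [Fin.sum_univ_three]
      field_simp
      ring
    · fin_cases i <;> simp

lemma intEmbed_mem_QTriangle_iff {w : ℤ} (hw : 0 < w) {p : Fin 2 → ℤ} :
    intEmbed p ∈ QTriangle w ↔ 0 ≤ p 0 ∧ p 0 ≤ p 1 ∧ p 0 + p 1 ≤ w := by
  simp only [mem_QTriangle_iff hw, intEmbed]
  norm_cast

lemma widthZ_eq_sub {S : Multiset ℤ} {a d : ℤ} (ha : a ∈ S) (hd : d ∈ S)
    (hS : ∀ x ∈ S, a ≤ x ∧ x ≤ d) : widthZ S = d - a := by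
  have hmax : IsGreatest ((fun n : ℤ => (n : ℝ)) '' {n | n ∈ S}) d :=
    ⟨⟨d, hd, rfl⟩, by rintro _ ⟨x, hx, rfl⟩; exact Int.cast_le.mpr (hS x hx).2⟩
  have hmin : IsLeast ((fun n : ℤ => (n : ℝ)) '' {n | n ∈ S}) a :=
    ⟨⟨a, ha, rfl⟩, by rintro _ ⟨x, hx, rfl⟩; exact Int.cast_le.mpr (hS x hx).1⟩
  rw [widthZ, hmax.csSup_eq, hmin.csInf_eq]

lemma Multiset.quad_eq_reverse {α : Type*} (a b c d : α) :
    ({a, b, c, d} : Multiset α) = {d, c, b, a} :=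
  (Multiset.coe_reverse [a, b, c, d]).symm

section LinearOrder

variable {α : Type*} [LinearOrder α] {a b c d : α}

lemma Multiset.exists_sorted_of_card_eq_four {S : Multiset α} (hS : Multiset.card S = 4) :
    ∃ a b c d : α, a ≤ b ∧ b ≤ c ∧ c ≤ d ∧ S = {a, b, c, d} := by
  have hsorted := S.pairwise_sort (· ≤ ·)
  have hlen : (S.sort (· ≤ ·)).length = 4 := by rw [Multiset.length_sort, hS]
  rw [← Multiset.sort_eq S (· ≤ ·)]
  match S.sort (· ≤ ·), hlen, hsorted with
  | [a, b, c, d], _, hsorted =>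
    simp only [List.pairwise_cons, List.mem_cons, forall_eq_or_imp] at hsorted
    exact ⟨a, b, c, d, hsorted.1.1, hsorted.2.1.1, hsorted.2.2.1.1, rfl⟩

lemma Multiset.eq_of_sorted_of_quad_eq {a' b' c' d' : α} (hab : a ≤ b) (hbc : b ≤ c)
    (hcd : c ≤ d) (hab' : a' ≤ b') (hbc' : b' ≤ c') (hcd' : c' ≤ d')
    (h : ({a, b, c, d} : Multiset α) = {a', b', c', d'}) :
    a = a' ∧ b = b' ∧ c = c' ∧ d = d' := by
  have hl : [a, b, c, d] = [a', b', c', d'] :=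
    List.Perm.eq_of_pairwise' (r := (· ≤ ·)) (List.isChain_iff_pairwise.mp (by simp [*]))
      (List.isChain_iff_pairwise.mp (by simp [*])) (Multiset.coe_eq_coe.mp h)
  simpa using hl

end LinearOrder

section SortedQuadruples

variable {a b c d : ℤ}

lemma widthZ_of_sorted (hab : a ≤ b) (hbc : b ≤ c) (hcd : c ≤ d) :
    widthZ {a, b, c, d} = d - a :=
  widthZ_eq_sub (by simp) (by simp) (by simp; omega)

lemma exists_normalForm_of_sorted (hab : a ≤ b) (hbc : b ≤ c) (hcd : c ≤ d) :
    ∃ x y : ℤ, 0 ≤ x ∧ x ≤ y ∧ x + y ≤ d - a ∧ MsetEquivZ {0, x, y, d - a} {a, b, c, d} := by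
  by_cases hside : (b - a) + (c - a) ≤ d - a
  · exact ⟨b - a, c - a, by omega, by omega, hside, 1, isUnit_one, a, by simp⟩
  · refine ⟨d - c, d - b, by omega, by omega, by omega, -1, isUnit_one.neg, d, ?_⟩
    simpa using (Multiset.quad_eq_reverse a b c d).symm

lemma gaps_eq_of_msetEquivZ {a' b' c' d' : ℤ} (hab : a ≤ b) (hbc : b ≤ c) (hcd : c ≤ d)
    (hab' : a' ≤ b') (hbc' : b' ≤ c') (hcd' : c' ≤ d')
    (h : MsetEquivZ {a, b, c, d} {a', b', c', d'}) :
    (b' - a' = b - a ∧ c' - a' = c - a ∧ d' - a' = d - a) ∨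
      (b' - a' = d - c ∧ c' - a' = d - b ∧ d' - a' = d - a) := by
  obtain ⟨u, hu, t, h⟩ := h
  rcases Int.isUnit_iff.mp hu with rfl | rfl
  · simp only [Multiset.insert_eq_cons, Multiset.map_cons, Multiset.map_singleton] at h
    have := Multiset.eq_of_sorted_of_quad_eq (by omega) (by omega) (by omega) hab' hbc' hcd' h
    omega
  · rw [Multiset.quad_eq_reverse a] at h
    simp only [Multiset.insert_eq_cons, Multiset.map_cons, Multiset.map_singleton] at h
    have := Multiset.eq_of_sorted_of_quad_eq (by omega) (by omega) (by omega) hab' hbc' hcd' h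
    omega

end SortedQuadruples

lemma msetEquivZ_equivalence : Equivalence MsetEquivZ where
  refl S := ⟨1, isUnit_one, 0, by simp⟩
  symm := by
    rintro S T ⟨u, hu, t, rfl⟩
    refine ⟨u, hu, -u * t, ?_⟩
    rw [Multiset.map_map]
    convert Multiset.map_id S using 2 with x
    rcases Int.isUnit_iff.mp hu with rfl | rfl <;> simp
  trans := by
    rintro S T U ⟨u, hu, t, rfl⟩ ⟨u', hu', t', rfl⟩
    refine ⟨u' * u, hu'.mul hu, u' * t + t', ?_⟩
    rw [Multiset.map_map]
    congr 1
    ext x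
    simp only [Function.comp_apply]
    ring

lemma Nat.card_quot_eq_of_transversal {α β : Type*} {r : α → α → Prop} (hr : Equivalence r)
    (f : β → α) (hsurj : ∀ x, ∃ y, r (f y) x) (hinj : ∀ y y', r (f y) (f y') → y = y') :
    Nat.card (Quot r) = Nat.card β := by
  refine (Nat.card_eq_of_bijective (fun y => Quot.mk r (f y)) ⟨fun y y' h => ?_, fun q => ?_⟩).symm
  · exact hinj y y' (hr.eqvGen_iff.mp (Quot.eqvGen_exact h))
  · obtain ⟨x, rfl⟩ := q.exists_rep
    obtain ⟨y, hy⟩ := hsurj x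
    exact ⟨y, Quot.sound hy⟩

lemma sum_range_sub_two_mul (c : ℤ) (m : ℕ) :
    ∑ a ∈ range m, (c - 2 * a) = m * (c + 1 - m) := by
  induction m with
  | zero => simp
  | succ m ih => rw [sum_range_succ, ih]; push_cast; ring

lemma card_lattice_triangle (n : ℕ) :
    Nat.card {p : Fin 2 → ℤ // 0 ≤ p 0 ∧ p 0 ≤ p 1 ∧ p 0 + p 1 ≤ n} =
      ((n / 2 : ℕ) + 1 : ℤ) * (n + 1 - (n / 2 : ℕ)) := by
  let columns := (range (n / 2 + 1)).sigma fun a => Icc a (n - a)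
  have hbij : Function.Bijective fun x : columns =>
      (⟨![(x.1.1 : ℤ), x.1.2], by
        obtain ⟨⟨a, b⟩, hx⟩ := x
        simp only [columns, mem_sigma, mem_range, mem_Icc] at hx
        simp; omega⟩ : {p : Fin 2 → ℤ // 0 ≤ p 0 ∧ p 0 ≤ p 1 ∧ p 0 + p 1 ≤ n}) := by
    refine ⟨fun ⟨⟨a, b⟩, _⟩ ⟨⟨a', b'⟩, _⟩ h => ?_, fun ⟨p, hp⟩ => ?_⟩
    · have h₀ := congrFun (congrArg Subtype.val h) 0
      have h₁ := congrFun (congrArg Subtype.val h) 1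
      simp only [Matrix.cons_val_zero, Matrix.cons_val_one, Nat.cast_inj] at h₀ h₁
      subst h₀ h₁
      rfl
    · refine ⟨⟨⟨(p 0).toNat, (p 1).toNat⟩, ?_⟩, ?_⟩
      · simp only [columns, mem_sigma, mem_range, mem_Icc]
        omega
      · ext i
        fin_cases i <;> simp <;> omega
  have hcolumn : ∀ a ∈ range (n / 2 + 1), (#(Icc a (n - a)) : ℤ) = (n + 1 : ℤ) - 2 * a := by
    intro a ha
    rw [mem_range] at ha
    rw [Nat.card_Icc]
    omega
  rw [← Nat.card_eq_of_bijective _ hbij, Nat.card_eq_finsetCard, card_sigma, Nat.cast_sum,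
    sum_congr rfl hcolumn, sum_range_sub_two_mul]
  push_cast
  ring

lemma card_QTriangle_lattice {w : ℤ} (hw : 0 < w) :
    (Nat.card {p : Fin 2 → ℤ // intEmbed p ∈ QTriangle w} : ℚ) =
      if Even w then (w : ℚ) ^ 2 / 4 + w + 1 else (w : ℚ) ^ 2 / 4 + w + 3 / 4 := by
  lift w to ℕ using hw.le
  have hcount := card_lattice_triangle w
  simp only [← intEmbed_mem_QTriangle_iff hw] at hcount
  rw [← Int.cast_natCast, hcount]
  rcases Nat.even_or_odd' w with ⟨m, rfl | rfl⟩
  · rw [if_pos (by simp), show 2 * m / 2 = m by omega]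
    push_cast
    ring
  · rw [if_neg (by simp), show (2 * m + 1) / 2 = m by omega]
    push_cast
    ring

section NormalForm

variable {w : ℤ}

lemma widthZ_normalForm (hw : 0 < w) {p : Fin 2 → ℤ} (hp : intEmbed p ∈ QTriangle w) :
    widthZ {0, p 0, p 1, w} = w := by
  obtain ⟨h₀, h₀₁, h₁⟩ := (intEmbed_mem_QTriangle_iff hw).mp hp
  simpa using widthZ_of_sorted h₀ h₀₁ (by omega : p 1 ≤ w)

lemma exists_msetEquivZ_normalForm (hw : 0 < w) {S : Multiset ℤ} (hS : Multiset.card S = 4)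
    (hwS : widthZ S = w) :
    ∃ p : Fin 2 → ℤ, intEmbed p ∈ QTriangle w ∧ MsetEquivZ {0, p 0, p 1, w} S := by
  obtain ⟨a, b, c, d, hab, hbc, hcd, rfl⟩ := Multiset.exists_sorted_of_card_eq_four hS
  have hda : d - a = w := by
    rw [widthZ_of_sorted hab hbc hcd] at hwS
    exact_mod_cast hwS
  obtain ⟨x, y, hx, hxy, hxy', he⟩ := exists_normalForm_of_sorted hab hbc hcd
  exact ⟨![x, y], (intEmbed_mem_QTriangle_iff hw).mpr (by simp; omega), by simpa [hda] using he⟩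

lemma eq_of_msetEquivZ_normalForm (hw : 0 < w) {p q : Fin 2 → ℤ} (hp : intEmbed p ∈ QTriangle w)
    (hq : intEmbed q ∈ QTriangle w) (h : MsetEquivZ {0, p 0, p 1, w} {0, q 0, q 1, w}) :
    p = q := by
  obtain ⟨hp₀, hp₀₁, hp₁⟩ := (intEmbed_mem_QTriangle_iff hw).mp hp
  obtain ⟨hq₀, hq₀₁, hq₁⟩ := (intEmbed_mem_QTriangle_iff hw).mp hq
  have := gaps_eq_of_msetEquivZ hp₀ hp₀₁ (by omega) hq₀ hq₀₁ (by omega) h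
  exact funext (Fin.forall_fin_two.mpr ⟨by omega, by omega⟩)

end NormalForm

/-- The map `(x₁, x₂) ↦ {0, x₁, x₂, w₁}` is a bijection from the lattice points of
`Q_{w₁}` onto the affine equivalence classes of four-point multisets in `ℤ` of width
`w₁`; in particular these classes are counted by `w₁²/4 + w₁ + 1` (`w₁` even) and
`w₁²/4 + w₁ + 3/4` (`w₁` odd). -/
theorem four_point_sets_in_line (w1 : ℤ) (hw1 : 0 < w1) :
    (∀ p : Fin 2 → ℤ, intEmbed p ∈ QTriangle w1 →
        widthZ ({0, p 0, p 1, w1} : Multiset ℤ) = (w1 : ℝ)) ∧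
    (∀ S : Multiset ℤ, Multiset.card S = 4 → widthZ S = (w1 : ℝ) →
        ∃ p : Fin 2 → ℤ, intEmbed p ∈ QTriangle w1 ∧
          MsetEquivZ ({0, p 0, p 1, w1} : Multiset ℤ) S) ∧
    (∀ p q : Fin 2 → ℤ, intEmbed p ∈ QTriangle w1 → intEmbed q ∈ QTriangle w1 →
        MsetEquivZ ({0, p 0, p 1, w1} : Multiset ℤ) ({0, q 0, q 1, w1} : Multiset ℤ) →
        p = q) ∧
    ((Nat.card (Quot fun S T : {S : Multiset ℤ //
          Multiset.card S = 4 ∧ widthZ S = (w1 : ℝ)} => MsetEquivZ S.1 T.1) : ℚ) =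
      if Even w1 then (w1 : ℚ) ^ 2 / 4 + w1 + 1 else (w1 : ℚ) ^ 2 / 4 + w1 + 3 / 4) := by
  refine ⟨fun p => widthZ_normalForm hw1, fun S => exists_msetEquivZ_normalForm hw1,
    fun p q => eq_of_msetEquivZ_normalForm hw1, ?_⟩
  rw [← card_QTriangle_lattice hw1, Nat.cast_inj]
  exact Nat.card_quot_eq_of_transversal (msetEquivZ_equivalence.comap Subtype.val)
    (fun p => ⟨{0, p.1 0, p.1 1, w1}, by simp, widthZ_normalForm hw1 p.2⟩)
    (fun ⟨S, hS, hwS⟩ =>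
      let ⟨p, hp, hpS⟩ := exists_msetEquivZ_normalForm hw1 hS hwS
      ⟨⟨p, hp⟩, hpS⟩)
    (fun p q h => Subtype.ext (eq_of_msetEquivZ_normalForm hw1 p.2 q.2 h))
end
end

section
/- Let 0 < w1 ≤ w2 be integers and let S = {(0,0), (0,y0), (w1,y1), (w1,w2)} with integers max{w2 − y1, w2 − (w1 − y1)} ≤ y0 < w2 and 0 < y1. Then for every dual vector u = (a, b) ∈ (ℤ²)* with b ≠ 0 one has width_u(conv S) ≥ w2; consequently S has multi-width (w1, w2). -/
open scoped Pointwise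

noncomputable section

section FourPointAux
/-- aux -/
def dualPairLM {d : ℕ} (u : Fin d → ℤ) : (Fin d → ℝ) →ₗ[ℝ] ℝ where
  toFun x := dualPair u x
  map_add' x y := by simp [dualPair, mul_add, Finset.sum_add_distrib]
  map_smul' c x := by simp [dualPair, Finset.mul_sum, mul_left_comm]

lemma csSup_convexHull {t : Set ℝ} (hne : t.Nonempty) (hfin : t.Finite) :
    sSup (convexHull ℝ t) = sSup t := by
  have hb : BddAbove t := hfin.bddAbove
  have hb' : BddBelow t := hfin.bddBelow
  have hsub : convexHull ℝ t ⊆ Set.Icc (sInf t) (sSup t) :=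
    convexHull_min (fun x hx => ⟨csInf_le hb' hx, le_csSup hb hx⟩) (convex_Icc _ _)
  obtain ⟨x, hx⟩ := hne
  refine le_antisymm ?_ ?_
  · exact csSup_le ⟨x, subset_convexHull ℝ t hx⟩ (fun y hy => (hsub hy).2)
  · exact csSup_le_csSup (BddAbove.mono hsub bddAbove_Icc) ⟨x, hx⟩ (subset_convexHull ℝ t)

lemma csInf_convexHull {t : Set ℝ} (hne : t.Nonempty) (hfin : t.Finite) :
    sInf (convexHull ℝ t) = sInf t := by
  have hb : BddAbove t := hfin.bddAbove
  have hb' : BddBelow t := hfin.bddBelow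
  have hsub : convexHull ℝ t ⊆ Set.Icc (sInf t) (sSup t) :=
    convexHull_min (fun x hx => ⟨csInf_le hb' hx, le_csSup hb hx⟩) (convex_Icc _ _)
  obtain ⟨x, hx⟩ := hne
  refine le_antisymm ?_ ?_
  · exact csInf_le_csInf (BddBelow.mono hsub bddBelow_Icc) ⟨x, hx⟩ (subset_convexHull ℝ t)
  · exact le_csInf ⟨x, subset_convexHull ℝ t hx⟩ (fun y hy => (hsub hy).1)


lemma dualPair_pt (a b x y : ℤ) :
    dualPair ![a, b] (intEmbed ![x, y]) = ((a * x + b * y : ℤ) : ℝ) := by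
  simp [dualPair, intEmbed, Fin.sum_univ_two]

lemma csSup_quad (p q r s : ℝ) : sSup ({p, q, r, s} : Set ℝ) = max (max p q) (max r s) := by
  have h3 : BddAbove ({r, s} : Set ℝ) := ((Set.finite_singleton _).insert _).bddAbove
  have h2 : BddAbove ({q, r, s} : Set ℝ) :=
    (((Set.finite_singleton _).insert _).insert _).bddAbove
  rw [csSup_insert h2 ⟨q, Set.mem_insert _ _⟩, csSup_insert h3 ⟨r, Set.mem_insert _ _⟩,
    csSup_pair]
  rw [max_assoc]

lemma csInf_quad (p q r s : ℝ) : sInf ({p, q, r, s} : Set ℝ) = min (min p q) (min r s) := by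
  have h3 : BddBelow ({r, s} : Set ℝ) := ((Set.finite_singleton _).insert _).bddBelow
  have h2 : BddBelow ({q, r, s} : Set ℝ) :=
    (((Set.finite_singleton _).insert _).insert _).bddBelow
  rw [csInf_insert h2 ⟨q, Set.mem_insert _ _⟩, csInf_insert h3 ⟨r, Set.mem_insert _ _⟩,
    csInf_pair]
  rw [min_assoc]

lemma widthIn_four (a b x0 y0 x1 y1 x2 y2 x3 y3 : ℤ) :
    widthIn ![a, b]
      (msetHull ({![x0,y0], ![x1,y1], ![x2,y2], ![x3,y3]} : Multiset (Fin 2 → ℤ)))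
      = ((max (max (a*x0+b*y0) (a*x1+b*y1)) (max (a*x2+b*y2) (a*x3+b*y3)) : ℤ) : ℝ)
        - ((min (min (a*x0+b*y0) (a*x1+b*y1)) (min (a*x2+b*y2) (a*x3+b*y3)) : ℤ) : ℝ) := by
  have hset : {v | v ∈ ({![x0,y0], ![x1,y1], ![x2,y2], ![x3,y3]} : Multiset (Fin 2 → ℤ))}
      = ({![x0,y0], ![x1,y1], ![x2,y2], ![x3,y3]} : Set (Fin 2 → ℤ)) := by
    ext v; simp
  have hc : dualPair ![a, b] = ⇑(dualPairLM ![a, b]) := rfl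
  have himg : dualPair ![a, b] '' msetHull ({![x0,y0], ![x1,y1], ![x2,y2], ![x3,y3]} :
      Multiset (Fin 2 → ℤ)) = convexHull ℝ
      ({((a*x0+b*y0 : ℤ) : ℝ), ((a*x1+b*y1 : ℤ) : ℝ), ((a*x2+b*y2 : ℤ) : ℝ),
        ((a*x3+b*y3 : ℤ) : ℝ)} : Set ℝ) := by
    rw [msetHull, hc, (dualPairLM ![a, b]).image_convexHull, msetPts, hset]
    congr 1
    simp only [Set.image_insert_eq, Set.image_singleton, ← hc, dualPair_pt]
  have hfin : ({((a*x0+b*y0 : ℤ) : ℝ), ((a*x1+b*y1 : ℤ) : ℝ), ((a*x2+b*y2 : ℤ) : ℝ),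
      ((a*x3+b*y3 : ℤ) : ℝ)} : Set ℝ).Finite :=
    Set.Finite.insert _ (Set.Finite.insert _ (Set.Finite.insert _ (Set.finite_singleton _)))
  have hne : ({((a*x0+b*y0 : ℤ) : ℝ), ((a*x1+b*y1 : ℤ) : ℝ), ((a*x2+b*y2 : ℤ) : ℝ),
      ((a*x3+b*y3 : ℤ) : ℝ)} : Set ℝ).Nonempty := ⟨_, Set.mem_insert _ _⟩
  rw [widthIn, himg, csSup_convexHull hne hfin, csInf_convexHull hne hfin,
    csSup_quad, csInf_quad]
  push_cast
  ring


lemma li_std : LinearIndependent ℤ (![![1,0],![0,1]] : Fin 2 → Fin 2 → ℤ) := by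
  rw [Fintype.linearIndependent_iff]
  intro g hg i
  have h0 := congrFun hg 0
  have h1 := congrFun hg 1
  simp [Fin.sum_univ_two] at h0 h1
  fin_cases i <;> simp [h0, h1]

lemma not_both_b_zero (u : Fin 2 → Fin 2 → ℤ) (hu : LinearIndependent ℤ u)
    (h0 : u 0 1 = 0) (h1 : u 1 1 = 0) : False := by
  have hne := hu.ne_zero 0
  have key := (Fintype.linearIndependent_iff.mp hu) ![u 1 0, -(u 0 0)]
  have hsum : ∑ i, (![u 1 0, -(u 0 0)] : Fin 2 → ℤ) i • u i = 0 := by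
    funext x
    fin_cases x <;> simp [Fin.sum_univ_two, h0, h1] <;> ring
  have h00 : u 0 0 = 0 := by
    have := key hsum 1
    simpa using this
  apply hne
  funext j
  fin_cases j
  · exact h00
  · exact h0

lemma lex_le_pair (x0 x1 y0 y1 : ℝ) (h : x0 < y0 ∨ (x0 = y0 ∧ x1 ≤ y1)) :
    toLex (![x0, x1] : Fin 2 → ℝ) ≤ toLex (![y0, y1] : Fin 2 → ℝ) := by
  rcases h with h | ⟨he, h1⟩
  · apply le_of_lt
    exact ⟨0, fun j hj => absurd hj (by simp), by simpa using h⟩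
  · rcases eq_or_lt_of_le h1 with he1 | hlt
    · apply le_of_eq
      congr 1
      funext j; fin_cases j <;> simpa using (by first | exact he | exact he1)
    · apply le_of_lt
      refine ⟨1, fun j hj => ?_, by simpa using hlt⟩
      fin_cases j
      · simpa using he
      · exact absurd hj (by simp)


lemma key_ge (w1 w2 y0 y1 a b : ℤ) (h0 : 0 < w1) (h12 : w1 ≤ w2)
    (hy1 : 0 < y1) (hy0 : max (w2 - y1) (w2 - (w1 - y1)) ≤ y0) (hy0' : y0 < w2)
    (hb : b ≠ 0) :
    w2 ≤ max (max (a*0+b*0) (a*0+b*y0)) (max (a*w1+b*y1) (a*w1+b*w2))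
      - min (min (a*0+b*0) (a*0+b*y0)) (min (a*w1+b*y1) (a*w1+b*w2)) := by
  have hA : y0 - y1 ≥ w2 - w1 := by omega
  set M := max (max (a*0+b*0) (a*0+b*y0)) (max (a*w1+b*y1) (a*w1+b*w2)) with hM
  set m := min (min (a*0+b*0) (a*0+b*y0)) (min (a*w1+b*y1) (a*w1+b*w2)) with hm
  have hM0 : a*0+b*0 ≤ M := le_trans (le_max_left _ _) (le_max_left _ _)
  have hM1 : a*0+b*y0 ≤ M := le_trans (le_max_right _ _) (le_max_left _ _)
  have hM2 : a*w1+b*y1 ≤ M := le_trans (le_max_left _ _) (le_max_right _ _)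
  have hM3 : a*w1+b*w2 ≤ M := le_trans (le_max_right _ _) (le_max_right _ _)
  have hm0 : m ≤ a*0+b*0 := le_trans (min_le_left _ _) (min_le_left _ _)
  have hm1 : m ≤ a*0+b*y0 := le_trans (min_le_left _ _) (min_le_right _ _)
  have hm2 : m ≤ a*w1+b*y1 := le_trans (min_le_right _ _) (min_le_left _ _)
  have hm3 : m ≤ a*w1+b*w2 := le_trans (min_le_right _ _) (min_le_right _ _)
  rcases hb.lt_or_gt with hbneg | hbpos
  · rcases le_or_gt a 0 with ha | ha
    · -- use M ≥ 0, m ≤ a*w1+b*w2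
      have h1 : a * w1 ≤ 0 := mul_nonpos_of_nonpos_of_nonneg ha h0.le
      have h2 : b * w2 ≤ -w2 := by nlinarith
      linarith
    · -- use M ≥ a*w1+b*y1, m ≤ b*y0
      have h1 : w1 ≤ a * w1 := by nlinarith
      have h2 : b * y1 - b * y0 ≥ w2 - w1 := by nlinarith
      linarith
  · rcases le_or_gt 0 a with ha | ha
    · have h1 : 0 ≤ a * w1 := mul_nonneg ha h0.le
      have h2 : w2 ≤ b * w2 := by nlinarith
      linarith
    · have h1 : a * w1 ≤ -w1 := by nlinarith
      have h2 : b * y0 - b * y1 ≥ w2 - w1 := by nlinarith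
      linarith

lemma key_ge1 (w1 a y0 y1 w2 : ℤ) (h0 : 0 < w1) (ha : a ≠ 0) :
    w1 ≤ max (max (a*0+0*0) (a*0+0*y0)) (max (a*w1+0*y1) (a*w1+0*w2))
      - min (min (a*0+0*0) (a*0+0*y0)) (min (a*w1+0*y1) (a*w1+0*w2)) := by
  simp only [mul_zero, zero_mul, add_zero, zero_add, max_self, min_self]
  rcases ha.lt_or_gt with h | h
  · have : a * w1 ≤ -w1 := by nlinarith
    omega
  · have : w1 ≤ a * w1 := by nlinarith
    omega

end FourPointAux

/-- For `0 < w₁ ≤ w₂` and `S = {(0,0), (0,y₀), (w₁,y₁), (w₁,w₂)}` with `0 < y₁` and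
`max{w₂ − y₁, w₂ − (w₁ − y₁)} ≤ y₀ < w₂`, every dual vector `(a, b)` with `b ≠ 0` gives
width at least `w₂`; consequently `S` has multi-width `(w₁, w₂)`. -/
theorem four_point_set_case2_width (w1 w2 y0 y1 : ℤ) (h0 : 0 < w1) (h12 : w1 ≤ w2)
    (hy1 : 0 < y1) (hy0 : max (w2 - y1) (w2 - (w1 - y1)) ≤ y0) (hy0' : y0 < w2) :
    (∀ a b : ℤ, b ≠ 0 →
      (w2 : ℝ) ≤ widthIn ![a, b]
        (msetHull ({![0, 0], ![0, y0], ![w1, y1], ![w1, w2]} : Multiset (Fin 2 → ℤ)))) ∧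
    IsMultiWidth
      (msetHull ({![0, 0], ![0, y0], ![w1, y1], ![w1, w2]} : Multiset (Fin 2 → ℤ)))
      ![(w1 : ℝ), (w2 : ℝ)] := by
  set S : Multiset (Fin 2 → ℤ) := {![0, 0], ![0, y0], ![w1, y1], ![w1, w2]} with hS
  have hy1w : y1 < w1 := by omega
  have hy0pos : 0 < y0 := by omega
  have part1 : ∀ a b : ℤ, b ≠ 0 → (w2 : ℝ) ≤ widthIn ![a, b] (msetHull S) := by
    intro a b hb
    rw [hS, widthIn_four a b 0 0 0 y0 w1 y1 w1 w2, ← Int.cast_sub, Int.cast_le]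
    exact key_ge w1 w2 y0 y1 a b h0 h12 hy1 hy0 hy0' hb
  refine ⟨part1, ?_, ?_⟩
  · refine ⟨![![1, 0], ![0, 1]], li_std, ?_⟩
    intro i
    fin_cases i
    · show widthIn ![(1 : ℤ), 0] (msetHull S) = ((w1 : ℝ))
      rw [hS, widthIn_four 1 0 0 0 0 y0 w1 y1 w1 w2, ← Int.cast_sub, show ((w1:ℝ)) = ((w1:ℤ):ℝ) from rfl, Int.cast_inj]
      omega
    · show widthIn ![(0 : ℤ), 1] (msetHull S) = ((w2 : ℝ))
      rw [hS, widthIn_four 0 1 0 0 0 y0 w1 y1 w1 w2, ← Int.cast_sub, show ((w2:ℝ)) = ((w2:ℤ):ℝ) from rfl, Int.cast_inj]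
      omega
  · rintro w' ⟨u, hu, hw⟩
    have hui : ∀ i, u i = ![u i 0, u i 1] := by
      intro i; funext j; fin_cases j <;> rfl
    have hlow : ∀ i, (w1 : ℝ) ≤ w' i := by
      intro i
      rw [← hw i, hui i]
      by_cases hb : u i 1 = 0
      · have ha : u i 0 ≠ 0 := by
          intro ha
          exact hu.ne_zero i (by funext j; fin_cases j <;> simp [ha, hb])
        rw [hb, hS, widthIn_four (u i 0) 0 0 0 0 y0 w1 y1 w1 w2, ← Int.cast_sub, Int.cast_le]
        exact key_ge1 w1 (u i 0) y0 y1 w2 h0 ha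
      · exact le_trans (by exact_mod_cast h12) (part1 (u i 0) (u i 1) hb)
    have hbig : ∀ i, u i 1 ≠ 0 → (w2 : ℝ) ≤ w' i := by
      intro i hb
      rw [← hw i, hui i]
      exact part1 (u i 0) (u i 1) hb
    have hw'eq : w' = ![w' 0, w' 1] := by funext j; fin_cases j <;> rfl
    rw [hw'eq]
    apply lex_le_pair
    rcases lt_or_eq_of_le (hlow 0) with h | h
    · exact Or.inl h
    · refine Or.inr ⟨h, ?_⟩
      by_cases hb1 : u 1 1 = 0
      · have hb0 : u 0 1 ≠ 0 := fun hb0 => not_both_b_zero u hu hb0 hb1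
        have h1 := hbig 0 hb0
        have h2 := hlow 1
        have : (w2 : ℝ) ≤ (w1 : ℝ) := h ▸ h1
        have hww : (w1 : ℝ) ≤ (w2 : ℝ) := by exact_mod_cast h12
        linarith
      · exact hbig 1 hb1
end
end
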